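/- Let F(s,u) = γ(s) + uξ(s) be the asymptotic completion of a developable Möbius strip, i.e., det(γ'(s), ξ(s), ξ'(s)) = 0 for all s. Then both sets {s ∈ ℝ : ξ'(s) ≠ 0} and {s ∈ ℝ : ξ'(s) = 0} are nonempty. In particular, the singular set of F is nonempty, and some rulings of F contain no singular points. -/

import Mathlib

open scoped RealInnerProductSpace
open Real Set Filter Topology

noncomputable section

/-- Euclidean 3-space. -/
abbrev E3 : Type := EuclideanSpace ℝ (Fin 3)

/-- The cross (vector) product in `ℝ³`. -/
def cross3 (a b : E3) : E3 :=
  (WithLp.equiv 2 (Fin 3 → ℝ)).symm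
    ![a 1 * b 2 - a 2 * b 1, a 2 * b 0 - a 0 * b 2, a 0 * b 1 - a 1 * b 0]

/-- The determinant of three vectors in `ℝ³`. -/
def det3 (a b c : E3) : ℝ :=
  Matrix.det (Matrix.of ![(fun i => a i), (fun i => b i), (fun i => c i)])

lemma cross3_apply (a b : E3) (i : Fin 3) :
    cross3 a b i = ![a 1 * b 2 - a 2 * b 1, a 2 * b 0 - a 0 * b 2, a 0 * b 1 - a 1 * b 0] i := rfl

lemma inner3 (a b : E3) : ⟪a, b⟫ = a 0 * b 0 + a 1 * b 1 + a 2 * b 2 := by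
  simp [PiLp.inner_apply, Fin.sum_univ_three]; ring

lemma det3_expand (a b c : E3) : det3 a b c = ⟪cross3 a b, c⟫ := by
  simp [det3, Matrix.det_fin_three, inner3, cross3_apply, Fin.sum_univ_three]
  ring

lemma lagrange (a b : E3) :
    ⟪a, a⟫ * ⟪b, b⟫ = ⟪a, b⟫ ^ 2 + ⟪cross3 a b, cross3 a b⟫ := by
  simp only [inner3]; simp [cross3_apply, Fin.sum_univ_three]; ring

lemma triple (a b c : E3) : cross3 a (cross3 b c) = ⟪a, c⟫ • b - ⟪a, b⟫ • c := by
  ext i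
  fin_cases i <;>
    simp [inner3, cross3_apply, Fin.sum_univ_three, PiLp.sub_apply, PiLp.smul_apply,
      smul_eq_mul] <;> ring

lemma cyc (a b c : E3) : ⟪cross3 a b, c⟫ = ⟪cross3 b c, a⟫ := by
  simp [inner3, cross3_apply, Fin.sum_univ_three]; ring

lemma inner_cross3_right (a b : E3) : ⟪cross3 a b, b⟫ = 0 := by
  simp [inner3, cross3_apply, Fin.sum_univ_three]; ring

lemma cross3_neg_right (a b : E3) : cross3 a (-b) = -cross3 a b := by
  ext i
  fin_cases i <;> simp [cross3_apply, PiLp.neg_apply] <;> ring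

lemma cross3_neg_neg (a b : E3) : cross3 (-a) (-b) = cross3 a b := by
  ext i
  fin_cases i <;> simp [cross3_apply, PiLp.neg_apply] <;> ring

lemma eq_zero_of_cross (a b : E3) (ha : a ≠ 0) (hi : ⟪a, b⟫ = 0)
    (hc : cross3 a b = 0) : b = 0 := by
  have h := lagrange a b
  rw [hi, hc, inner_zero_left] at h
  have h' : ⟪a, a⟫ * ⟪b, b⟫ = 0 := by rw [h]; ring
  have ha' : ⟪a, a⟫ ≠ 0 := fun h0 => ha (inner_self_eq_zero.mp h0)
  rcases mul_eq_zero.mp h' with h0 | h0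
  · exact absurd h0 ha'
  · exact inner_self_eq_zero.mp h0

lemma cross_eq_zero_of_perp (a b v : E3) (hab : ⟪a, b⟫ = 0) (hb : b ≠ 0)
    (hvb : ⟪v, b⟫ = 0) (hvc : ⟪v, cross3 a b⟫ = 0) : cross3 v a = 0 := by
  have e1 : ⟪b, a⟫ = (0:ℝ) := (real_inner_comm a b).trans hab
  have e2 : ⟪b, v⟫ = (0:ℝ) := (real_inner_comm v b).trans hvb
  apply eq_zero_of_cross b _ hb
  · calc ⟪b, cross3 v a⟫ = ⟪cross3 v a, b⟫ := real_inner_comm _ _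
      _ = ⟪cross3 a b, v⟫ := cyc _ _ _
      _ = ⟪v, cross3 a b⟫ := real_inner_comm _ _
      _ = 0 := hvc
  · rw [triple, e1, e2]; simp

lemma eq_zero_of_perp_basis (X N v : E3) (hX : X ≠ 0) (hN : N ≠ 0)
    (hXN : ⟪X, N⟫ = 0) (h1 : ⟪v, X⟫ = 0) (h2 : ⟪v, N⟫ = 0)
    (h3 : ⟪v, cross3 N X⟫ = 0) : v = 0 := by
  have hXv : cross3 X v = 0 := by
    apply eq_zero_of_cross N _ hN
    · calc ⟪N, cross3 X v⟫ = ⟪cross3 X v, N⟫ := real_inner_comm _ _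
        _ = ⟪cross3 v N, X⟫ := cyc _ _ _
        _ = ⟪cross3 N X, v⟫ := cyc _ _ _
        _ = ⟪v, cross3 N X⟫ := real_inner_comm _ _
        _ = 0 := h3
    · have e1 : ⟪N, v⟫ = (0:ℝ) := (real_inner_comm v N).trans h2
      have e2 : ⟪N, X⟫ = (0:ℝ) := (real_inner_comm X N).trans hXN
      rw [triple, e1, e2]; simp
  exact eq_zero_of_cross X v hX ((real_inner_comm v X).trans h1) hXv

lemma cross3_ne_zero_of_indep (a b : E3) (h : LinearIndependent ℝ ![a, b]) :
    cross3 a b ≠ 0 := by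
  intro hc
  have ha : a ≠ 0 := h.ne_zero 0
  have hL := lagrange a b
  rw [hc, inner_zero_left] at hL
  have h2 : ⟪a, a⟫ * ⟪b, b⟫ = ⟪a, b⟫ ^ 2 := by rw [hL]; ring
  have hrel : ⟪a, a⟫ • b - ⟪a, b⟫ • a = 0 := by
    have key : ⟪⟪a, a⟫ • b - ⟪a, b⟫ • a, ⟪a, a⟫ • b - ⟪a, b⟫ • a⟫ = (0:ℝ) := by
      simp only [inner_sub_left, inner_sub_right, real_inner_smul_left,
        real_inner_smul_right, real_inner_comm a b]
      linear_combination (⟪a, a⟫ : ℝ) * h2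
    exact inner_self_eq_zero.mp key
  have hcoef := (LinearIndependent.pair_iff.mp h (-⟪a, b⟫) ⟪a, a⟫ ?_).2
  · exact (fun h0 => ha (inner_self_eq_zero.mp h0)) hcoef
  · rw [neg_smul, add_comm, ← sub_eq_add_neg]
    exact hrel

lemma continuous_cross3 {f g : ℝ → E3} (hf : Continuous f) (hg : Continuous g) :
    Continuous fun s => cross3 (f s) (g s) := by
  have hc : ∀ i : Fin 3, Continuous fun s => f s i :=
    fun i => (EuclideanSpace.proj (𝕜 := ℝ) i).continuous.comp hf
  have hc' : ∀ i : Fin 3, Continuous fun s => g s i :=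
    fun i => (EuclideanSpace.proj (𝕜 := ℝ) i).continuous.comp hg
  unfold cross3
  refine (PiLp.continuous_toLp (p := 2) (β := fun _ : Fin 3 => ℝ)).comp ?_
  refine continuous_pi fun i => ?_
  fin_cases i <;> simp only [Matrix.cons_val_zero, Matrix.cons_val_one, Matrix.head_cons]
  · exact ((hc 1).mul (hc' 2)).sub ((hc 2).mul (hc' 1))
  · exact ((hc 2).mul (hc' 0)).sub ((hc 0).mul (hc' 2))
  · exact ((hc 0).mul (hc' 1)).sub ((hc 1).mul (hc' 0))

/-- for a developable Möbius strip, both `{s : ξ'(s) ≠ 0}` and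
`{s : ξ'(s) = 0}` are nonempty; in particular the singular set of `F` is nonempty and
some rulings contain no singular points. -/
theorem stmt_6 (l : ℝ) (hl : 0 < l) (γ ξ : ℝ → E3)
    (hγ : ContDiff ℝ (⊤ : ℕ∞) γ) (hξ : ContDiff ℝ (⊤ : ℕ∞) ξ)
    (hper : ∀ s, γ (s + l) = γ s) (hodd : ∀ s, ξ (s + l) = -ξ s)
    (hunit : ∀ s, ‖deriv γ s‖ = 1) (hξunit : ∀ s, ‖ξ s‖ = 1)
    (hindep : ∀ s, LinearIndependent ℝ ![deriv γ s, ξ s])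
    (hflat : ∀ s, det3 (deriv γ s) (ξ s) (deriv ξ s) = 0) :
    (∃ s : ℝ, deriv ξ s ≠ 0) ∧ (∃ s : ℝ, deriv ξ s = 0) ∧
    (∃ p : ℝ × ℝ, cross3 (deriv γ p.1 + p.2 • deriv ξ p.1) (ξ p.1) = 0) ∧
    (∃ s : ℝ, ∀ u : ℝ, cross3 (deriv γ s + u • deriv ξ s) (ξ s) ≠ 0) := by
  have hξdiff : Differentiable ℝ ξ := hξ.differentiable (by simp)
  have hXne : ∀ s, ξ s ≠ 0 := by
    intro s h0
    have := hξunit s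
    rw [h0] at this
    simp at this
  -- ξ' ⊥ ξ
  have hperp : ∀ s, ⟪ξ s, deriv ξ s⟫ = 0 := by
    intro s
    have hh : HasDerivAt (fun t => ⟪ξ t, ξ t⟫)
        (⟪ξ s, deriv ξ s⟫ + ⟪deriv ξ s, ξ s⟫) s :=
      HasDerivAt.inner ℝ (hξdiff s).hasDerivAt (hξdiff s).hasDerivAt
    have hconst : (fun t => ⟪ξ t, ξ t⟫) = fun _ => (1:ℝ) := by
      funext t
      rw [real_inner_self_eq_norm_sq, hξunit t, one_pow]
    rw [hconst] at hh
    have h0 := hh.unique (hasDerivAt_const s (1:ℝ))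
    rw [real_inner_comm (ξ s) (deriv ξ s)] at h0
    linarith
  -- ξ' ⊥ N
  have hperpN : ∀ s, ⟪cross3 (deriv γ s) (ξ s), deriv ξ s⟫ = 0 := by
    intro s
    rw [← det3_expand]
    exact hflat s
  have hNne : ∀ s, cross3 (deriv γ s) (ξ s) ≠ 0 :=
    fun s => cross3_ne_zero_of_indep _ _ (hindep s)
  -- Part 1
  have part1 : ∃ s : ℝ, deriv ξ s ≠ 0 := by
    by_contra h
    push_neg at h
    have hc : ξ l = ξ 0 := is_const_of_deriv_eq_zero hξdiff h l 0
    have h2 := hodd 0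
    rw [zero_add, hc] at h2
    have h3 : ξ 0 = 0 := by
      have h4 : ξ 0 + ξ 0 = 0 := by nth_rewrite 1 [h2]; abel
      have h5 : (2:ℝ) • ξ 0 = 0 := by rw [two_smul]; exact h4
      rcases smul_eq_zero.mp h5 with h6 | h6
      · norm_num at h6
      · exact h6
    exact hXne 0 h3
  -- the odd function g
  set G : ℝ → ℝ := fun s =>
    ⟪deriv ξ s, cross3 (cross3 (deriv γ s) (ξ s)) (ξ s)⟫ with hG
  have hGzero : ∀ s, G s = 0 → deriv ξ s = 0 := by
    intro s hGs
    refine eq_zero_of_perp_basis (ξ s) (cross3 (deriv γ s) (ξ s)) (deriv ξ s)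
      (hXne s) (hNne s) ?_ ?_ ?_ hGs
    · rw [real_inner_comm]
      exact inner_cross3_right _ _
    · rw [real_inner_comm]
      exact hperp s
    · rw [real_inner_comm]
      exact hperpN s
  have hγper : ∀ s, deriv γ (s + l) = deriv γ s := by
    intro s
    have h1 : (fun t => γ (t + l)) = γ := funext hper
    calc deriv γ (s + l) = deriv (fun t => γ (t + l)) s :=
          (deriv_comp_add_const γ l s).symm
      _ = deriv γ s := by rw [h1]
  have hξper : ∀ s, deriv ξ (s + l) = -deriv ξ s := by
    intro s
    have h1 : (fun t => ξ (t + l)) = fun t => -ξ t := funext hodd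
    have h2 : deriv (fun t => ξ (t + l)) s = deriv ξ (s + l) :=
      deriv_comp_add_const ξ l s
    rw [h1] at h2
    rw [← h2, deriv.fun_neg]
  have hGodd : ∀ s, G (s + l) = -G s := by
    intro s
    rw [hG]
    simp only
    rw [hγper, hodd, hξper, cross3_neg_right (deriv γ s) (ξ s), cross3_neg_neg, inner_neg_left]
  have hGcont : Continuous G := by
    have h1 : Continuous (deriv ξ) := hξ.continuous_deriv (by simp)
    have h2 : Continuous (deriv γ) := hγ.continuous_deriv (by simp)
    exact h1.inner (continuous_cross3 (continuous_cross3 h2 hξ.continuous) hξ.continuous)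
  -- Part 2
  have part2 : ∃ s : ℝ, deriv ξ s = 0 := by
    have hGl : G l = -G 0 := by
      have := hGodd 0
      rwa [zero_add] at this
    have hmem : (0:ℝ) ∈ uIcc (G 0) (G l) := by
      rw [hGl]
      rcases le_total (G 0) 0 with h | h <;> rw [Set.mem_uIcc] <;>
        [left; right] <;> constructor <;> linarith
    have := intermediate_value_uIcc (hGcont.continuousOn (s := uIcc 0 l)) hmem
    obtain ⟨s, _, hs⟩ := this
    exact ⟨s, hGzero s hs⟩
  refine ⟨part1, part2, ?_, ?_⟩
  -- Part 3
  · obtain ⟨s, hs⟩ := part1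
    have hX'X' : ⟪deriv ξ s, deriv ξ s⟫ ≠ 0 :=
      fun h0 => hs (inner_self_eq_zero.mp h0)
    set u : ℝ := -⟪deriv γ s, deriv ξ s⟫ / ⟪deriv ξ s, deriv ξ s⟫ with hu
    refine ⟨(s, u), ?_⟩
    simp only
    apply cross_eq_zero_of_perp (ξ s) (deriv ξ s) _ (hperp s) hs
    · have key : ∀ A B : ℝ, B ≠ 0 → A + -A / B * B = 0 := by
        intro A B hB; field_simp; ring
      rw [inner_add_left, real_inner_smul_left, hu]
      exact key _ _ hX'X'
    · rw [inner_add_left, real_inner_smul_left]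
      have e1 : ⟪deriv γ s, cross3 (ξ s) (deriv ξ s)⟫ = 0 := by
        calc ⟪deriv γ s, cross3 (ξ s) (deriv ξ s)⟫
            = ⟪cross3 (ξ s) (deriv ξ s), deriv γ s⟫ := real_inner_comm _ _
          _ = ⟪cross3 (deriv ξ s) (deriv γ s), ξ s⟫ := cyc _ _ _
          _ = ⟪cross3 (deriv γ s) (ξ s), deriv ξ s⟫ := cyc _ _ _
          _ = 0 := hperpN s
      have e2 : ⟪deriv ξ s, cross3 (ξ s) (deriv ξ s)⟫ = 0 := by
        rw [real_inner_comm]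
        exact inner_cross3_right _ _
      rw [e1, e2]
      ring
  -- Part 4
  · obtain ⟨s, hs⟩ := part2
    refine ⟨s, fun u => ?_⟩
    rw [hs, smul_zero, add_zero]
    exact hNne s
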